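/- arXiv:1509.03244 — 7 statements merged into one kernel-verified Lean document; each statement's English description precedes it below -/
import Mathlib

section
/- Let D be bounded self-adjoint with 0 < m ≤ D_t = e^{tL}De^{tL*} ≤ M for all t ∈ ℝ. Then the propagator satisfies the uniform bound ‖e^{tL}‖ ≤ (M/m)^{1/2} for all t ∈ ℝ. -/
open NormedSpace RealInnerProductSpace

/-- `D_t = e^{tL} D e^{tL*}`. -/
noncomputable def Dt {H : Type*} [NormedAddCommGroup H] [InnerProductSpace ℝ H]
    [CompleteSpace H] (L D : H →L[ℝ] H) (t : ℝ) : H →L[ℝ] H :=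
  exp (t • L) * D * ContinuousLinearMap.adjoint (exp (t • L))

/- Write `A = e^{tL}`, so that `⟪x, D_t x⟫ = ⟪A* x, D A* x⟫`. The lower bound at `t = 0` is
`m ≤ D`, and combined with the upper bound `D_t ≤ M` it gives `m ‖A* x‖² ≤ M ‖x‖²`. Hence
`‖A‖ = ‖A*‖ ≤ (M/m)^{1/2}`. -/

namespace ContinuousLinearMap

variable {𝕜 E F : Type*} [RCLike 𝕜] [NormedAddCommGroup E] [NormedSpace 𝕜 E]
  [NormedAddCommGroup F] [NormedSpace 𝕜 F]

theorem opNorm_le_sqrt_of_norm_apply_sq_le (A : E →L[𝕜] F) {c : ℝ}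
    (h : ∀ x, ‖A x‖ ^ 2 ≤ c * ‖x‖ ^ 2) : ‖A‖ ≤ √c := by
  refine opNorm_le_bound _ (Real.sqrt_nonneg c) fun x => ?_
  calc ‖A x‖ = √(‖A x‖ ^ 2) := (Real.sqrt_sq (norm_nonneg _)).symm
    _ ≤ √(c * ‖x‖ ^ 2) := Real.sqrt_le_sqrt (h x)
    _ = √c * ‖x‖ := by rw [Real.sqrt_mul' c (sq_nonneg _), Real.sqrt_sq (norm_nonneg x)]

variable {H : Type*} [NormedAddCommGroup H] [InnerProductSpace ℝ H] [CompleteSpace H]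

theorem inner_conj_adjoint_apply (A D : H →L[ℝ] H) (x : H) :
    ⟪x, (A * D * adjoint A) x⟫ = ⟪adjoint A x, D (adjoint A x)⟫ :=
  (adjoint_inner_left A _ x).symm

theorem opNorm_le_sqrt_of_le_conj_adjoint (A D : H →L[ℝ] H) {m M : ℝ}
    (hm : 0 < m) (hD : ∀ y, m * ‖y‖ ^ 2 ≤ ⟪y, D y⟫)
    (hconj : ∀ x, ⟪x, (A * D * adjoint A) x⟫ ≤ M * ‖x‖ ^ 2) : ‖A‖ ≤ √(M / m) := by
  rw [← adjoint.norm_map A]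
  refine opNorm_le_sqrt_of_norm_apply_sq_le _ fun x => ?_
  rw [div_mul_eq_mul_div, le_div_iff₀ hm, mul_comm]
  calc m * ‖adjoint A x‖ ^ 2 ≤ ⟪adjoint A x, D (adjoint A x)⟫ := hD _
    _ = ⟪x, (A * D * adjoint A) x⟫ := (inner_conj_adjoint_apply A D x).symm
    _ ≤ M * ‖x‖ ^ 2 := hconj x

end ContinuousLinearMap

theorem Dt_zero {H : Type*} [NormedAddCommGroup H] [InnerProductSpace ℝ H] [CompleteSpace H]
    (L D : H →L[ℝ] H) : Dt L D 0 = D := by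
  rw [Dt, zero_smul, exp_zero, ContinuousLinearMap.adjoint_one, one_mul, mul_one]

theorem stmt6_general {H : Type*} [NormedAddCommGroup H] [InnerProductSpace ℝ H] [CompleteSpace H]
    (L D : H →L[ℝ] H) (m M : ℝ) (hm : 0 < m)
    (hbound : ∀ (t : ℝ) (x : H),
      m * ‖x‖ ^ 2 ≤ ⟪x, Dt L D t x⟫ ∧ ⟪x, Dt L D t x⟫ ≤ M * ‖x‖ ^ 2) :
    ∀ t : ℝ, ‖exp (t • L)‖ ≤ Real.sqrt (M / m) := by
  intro t
  refine ContinuousLinearMap.opNorm_le_sqrt_of_le_conj_adjoint _ D hm (fun y => ?_)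
    (fun x => (hbound t x).2)
  simpa only [Dt_zero] using (hbound 0 y).1

/-- If `D` is bounded self-adjoint with `0 < m ≤ D_t ≤ M` for all `t`
(in the sense of quadratic forms), then `‖e^{tL}‖ ≤ (M/m)^{1/2}` for all `t`. -/
theorem stmt6 {H : Type*} [NormedAddCommGroup H] [InnerProductSpace ℝ H] [CompleteSpace H]
    (L D : H →L[ℝ] H) (hD : IsSelfAdjoint D) (m M : ℝ) (hm : 0 < m) (hmM : m ≤ M)
    (hbound : ∀ (t : ℝ) (x : H),
      m * ‖x‖ ^ 2 ≤ ⟪x, Dt L D t x⟫ ∧ ⟪x, Dt L D t x⟫ ≤ M * ‖x‖ ^ 2) :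
    ∀ t : ℝ, ‖exp (t • L)‖ ≤ Real.sqrt (M / m) :=
  stmt6_general L D m M hm hbound
end

section
/- Suppose D is bounded self-adjoint with m ≤ D_s, D_t ≤ M for all s,t ∈ ℝ, where 0 < m < M, and set δ = m/(M−m). Then for all α ∈ [−δ, 1+δ] and all s,t ∈ ℝ: (1−α) D_s^{-1} + α D_t^{-1} ≥ (2/M)·((M−m)/(M+m))·(δ + 1/2 − |α − 1/2|) as operators. -/
/-!
From `m ≤ D_t ≤ M` one gets `1/M ≤ D_t⁻¹ ≤ 1/m`: the upper bound by coercivity and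
Cauchy–Schwarz, the lower bound by expanding the nonnegative form of `D_t` at
`D_t⁻¹ x - M⁻¹ x`, which needs `D_t` self-adjoint. The form of `(1-α) D_s⁻¹ + α D_t⁻¹` at `x`
is then an affine combination of two numbers in `[‖x‖²/M, ‖x‖²/m]`, minimal at a corner.
By the symmetry `α ↔ 1-α` it suffices to take `α ≥ 1/2`; for `α ≤ 1` the corner value is
`‖x‖²/M`, and for `α > 1` it is `(1-α)‖x‖²/m + α‖x‖²/M`, which meets the stated bound
exactly at `α = 1 + δ`.
-/

open NormedSpace RealInnerProductSpace

section InverseFormBounds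

variable {H : Type*} [NormedAddCommGroup H] [InnerProductSpace ℝ H]
  {A : H →ₗ[ℝ] H} {x y : H}

theorem mul_inner_le_norm_sq_of_apply_eq {m : ℝ} (hm : 0 < m)
    (hA : ∀ z, m * ‖z‖ ^ 2 ≤ ⟪z, A z⟫) (hy : A y = x) :
    m * ⟪x, y⟫ ≤ ‖x‖ ^ 2 := by
  have hyx : m * ‖y‖ ^ 2 ≤ ‖y‖ * ‖x‖ := by
    calc m * ‖y‖ ^ 2 ≤ ⟪y, x⟫ := hy ▸ hA y
      _ ≤ ‖y‖ * ‖x‖ := real_inner_le_norm y x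
  have hmy : m * ‖y‖ ≤ ‖x‖ := by
    rcases (norm_nonneg y).eq_or_lt with h | h
    · simp [← h]
    · nlinarith
  calc m * ⟪x, y⟫ ≤ m * (‖x‖ * ‖y‖) := by gcongr; exact real_inner_le_norm x y
    _ ≤ ‖x‖ * ‖x‖ := by nlinarith [norm_nonneg x]
    _ = ‖x‖ ^ 2 := by ring

theorem LinearMap.IsSymmetric.norm_sq_le_mul_inner_of_apply_eq (hA : A.IsSymmetric) {M : ℝ}
    (hM : 0 < M) (hpos : ∀ z, 0 ≤ ⟪z, A z⟫) (hAM : ∀ z, ⟪z, A z⟫ ≤ M * ‖z‖ ^ 2)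
    (hy : A y = x) :
    ‖x‖ ^ 2 ≤ M * ⟪x, y⟫ := by
  have hAyx : ⟪y, A x⟫ = ‖x‖ ^ 2 := by rw [← hA, hy, real_inner_self_eq_norm_sq]
  have hexpand : ⟪y - M⁻¹ • x, A (y - M⁻¹ • x)⟫ =
      ⟪x, y⟫ - 2 * M⁻¹ * ‖x‖ ^ 2 + M⁻¹ ^ 2 * ⟪x, A x⟫ := by
    simp only [map_sub, map_smul, inner_sub_left, inner_sub_right, real_inner_smul_left,
      real_inner_smul_right, hAyx, hy, real_inner_self_eq_norm_sq, real_inner_comm y x]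
    ring
  have hxx : M⁻¹ ^ 2 * ⟪x, A x⟫ ≤ M⁻¹ * ‖x‖ ^ 2 :=
    calc M⁻¹ ^ 2 * ⟪x, A x⟫ ≤ M⁻¹ ^ 2 * (M * ‖x‖ ^ 2) := by gcongr; exact hAM x
      _ = M⁻¹ * ‖x‖ ^ 2 := by field_simp
  rw [← inv_mul_le_iff₀ hM]
  linarith [hexpand ▸ hpos (y - M⁻¹ • x)]

end InverseFormBounds

section AffineCombination

variable {m M n p q α : ℝ}

theorem le_affineComb_of_half_le (hm : 0 < m) (hmM : m < M)
    (hp : n ≤ M * p) (hp' : m * p ≤ n) (hq : n ≤ M * q)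
    (hα : 1 / 2 ≤ α) (hα' : (α - 1) * (M - m) ≤ m) :
    (M + m - 2 * (α - 1 / 2) * (M - m)) * n ≤ M * (M + m) * ((1 - α) * p + α * q) := by
  have hMm : 0 < M - m := by linarith
  have hn : 0 ≤ n := by nlinarith
  rcases le_total α 1 with hα1 | hα1
  · have hcomb : n ≤ M * ((1 - α) * p + α * q) := by
      nlinarith [mul_le_mul_of_nonneg_left hp (sub_nonneg.2 hα1),
        mul_le_mul_of_nonneg_left hq (by linarith : (0:ℝ) ≤ α)]
    nlinarith [mul_nonneg (mul_nonneg hn (sub_nonneg.2 hα)) hMm.le]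
  · have hcomb : M * (1 - α) * n + m * α * n ≤ M * m * ((1 - α) * p + α * q) := by
      nlinarith [mul_le_mul_of_nonneg_left hp' (sub_nonneg.2 hα1),
        mul_le_mul_of_nonneg_left hq (by linarith : (0:ℝ) ≤ α)]
    nlinarith [mul_nonneg hn (by linarith : (0:ℝ) ≤ m - (α - 1) * (M - m))]

theorem bound_mul_le_affineComb (hm : 0 < m) (hmM : m < M)
    (hp : n ≤ M * p) (hp' : m * p ≤ n) (hq : n ≤ M * q) (hq' : m * q ≤ n)
    (hα : α ∈ Set.Icc (-(m / (M - m))) (1 + m / (M - m))) :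
    2 / M * ((M - m) / (M + m)) * (m / (M - m) + 1 / 2 - |α - 1 / 2|) * n ≤
      (1 - α) * p + α * q := by
  have hMm : 0 < M - m := by linarith
  have hMMm : 0 < M * (M + m) := by nlinarith
  have hcoeff : 2 / M * ((M - m) / (M + m)) * (m / (M - m) + 1 / 2 - |α - 1 / 2|) * n =
      (M + m - 2 * |α - 1 / 2| * (M - m)) * n / (M * (M + m)) := by
    field_simp
    ring
  have hlo : -α * (M - m) ≤ m := (le_div_iff₀ hMm).1 (by linarith [hα.1])
  have hhi : (α - 1) * (M - m) ≤ m := (le_div_iff₀ hMm).1 (by linarith [hα.2])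
  rw [hcoeff, div_le_iff₀' hMMm]
  rcases le_total (1 / 2) α with h | h
  · rw [abs_of_nonneg (sub_nonneg.2 h)]
    exact le_affineComb_of_half_le hm hmM hp hp' hq h hhi
  · rw [abs_of_nonpos (sub_nonpos.2 h)]
    have := le_affineComb_of_half_le (α := 1 - α) hm hmM hq hq' hp (by linarith) (by linarith)
    linarith

end AffineCombination

theorem isSelfAdjoint_Dt {H : Type*} [NormedAddCommGroup H] [InnerProductSpace ℝ H]
    [CompleteSpace H] (L : H →L[ℝ] H) {D : H →L[ℝ] H} (hD : IsSelfAdjoint D) (t : ℝ) :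
    IsSelfAdjoint (Dt L D t) := by
  simpa [Dt, ContinuousLinearMap.star_eq_adjoint] using hD.conjugate (exp (t • L))

/-- If `m ≤ D_t ≤ M` for all `t` (with `0 < m < M`) and
`δ = m/(M−m)`, then for all `α ∈ [−δ, 1+δ]` and all `s, t`:
`(1−α) D_s⁻¹ + α D_t⁻¹ ≥ (2/M)·((M−m)/(M+m))·(δ + 1/2 − |α − 1/2|)`
in the sense of quadratic forms.  `Dinv t` denotes the two-sided bounded
inverse of `D_t`. -/
theorem stmt7 {H : Type*} [NormedAddCommGroup H] [InnerProductSpace ℝ H] [CompleteSpace H]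
    (L D : H →L[ℝ] H) (hD : IsSelfAdjoint D) (m M : ℝ) (hm : 0 < m) (hmM : m < M)
    (hbound : ∀ (t : ℝ) (x : H),
      m * ‖x‖ ^ 2 ≤ ⟪x, Dt L D t x⟫ ∧ ⟪x, Dt L D t x⟫ ≤ M * ‖x‖ ^ 2)
    (Dinv : ℝ → H →L[ℝ] H)
    (hDinv : ∀ t, Dt L D t * Dinv t = 1 ∧ Dinv t * Dt L D t = 1) :
    ∀ α ∈ Set.Icc (-(m / (M - m))) (1 + m / (M - m)), ∀ (s t : ℝ) (x : H),
      2 / M * ((M - m) / (M + m)) * (m / (M - m) + 1 / 2 - |α - 1 / 2|) * ‖x‖ ^ 2 ≤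
        ⟪x, ((1 - α) • Dinv s + α • Dinv t) x⟫ := by
  intro α hα s t x
  have hinv (u : ℝ) : ‖x‖ ^ 2 ≤ M * ⟪x, Dinv u x⟫ ∧ m * ⟪x, Dinv u x⟫ ≤ ‖x‖ ^ 2 := by
    have hy : Dt L D u (Dinv u x) = x := by
      simpa using congr($((hDinv u).1) x)
    have hpos (z : H) : 0 ≤ ⟪z, Dt L D u z⟫ := by
      linarith [(hbound u z).1, mul_nonneg hm.le (sq_nonneg ‖z‖)]
    exact ⟨(isSelfAdjoint_Dt L hD u).isSymmetric.norm_sq_le_mul_inner_of_apply_eq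
        (hm.trans hmM) hpos (fun z => (hbound u z).2) hy,
      mul_inner_le_norm_sq_of_apply_eq hm (fun z => (hbound u z).1) hy⟩
  obtain ⟨hs, hs'⟩ := hinv s
  obtain ⟨ht, ht'⟩ := hinv t
  simpa only [add_apply, smul_apply, inner_add_right,
    real_inner_smul_right] using bound_mul_le_affineComb hm hmM hs hs' ht ht' hα
end

section
/- Under hypotheses m ≤ D_t ≤ M (0<m<M) and T_t = D_t^{-1} − D^{-1} trace class, for every α ∈ ℝ with D^{-1} + α T_t > 0, the relative Rényi entropy satisfies e_t(α) := log ∫ exp(α ℓ_{ω_t|ω}) dω = (α/2) log det(I + D T_t) − (1/2) log det(I + α D T_t), where ω is the centered Gaussian measure with covariance D, ω_t that with covariance D_t, and ℓ_{ω_t|ω} = log(dω_t/dω). -/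
/-!
In the eigenbasis of `D^{1/2} T_t D^{1/2}` the exponent is affine in the independent `χ²`
variables `X j ^ 2`, and `E[exp (a X²)] = (1 - 2a)^{-1/2}` for `a < 1/2`. Hence the integral of
every partial sum factorizes, and these products converge because `∑ log (1 - 2 a_j)` does.
To pass to the limit we dominate by the same quadratic form with the negative coefficients
dropped; its integrability comes from Fatou's lemma, since its partial integrals converge too.
-/

open MeasureTheory ProbabilityTheory Real Filter Topology
open scoped ENNReal

theorem integrable_of_tendsto_ae_of_tendsto_integral {α : Type*} [MeasurableSpace α]
    {μ : Measure α} {f : ℕ → α → ℝ} {F : α → ℝ} {L : ℝ}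
    (hf : ∀ n, Integrable (f n) μ) (hf_nonneg : ∀ n, 0 ≤ᵐ[μ] f n)
    (h_lim : ∀ᵐ x ∂μ, Tendsto (fun n ↦ f n x) atTop (𝓝 (F x)))
    (h_int : Tendsto (fun n ↦ ∫ x, f n x ∂μ) atTop (𝓝 L)) :
    Integrable F μ := by
  refine ⟨aestronglyMeasurable_of_tendsto_ae _ (fun n ↦ (hf n).1) h_lim, ?_⟩
  have h_enorm : ∀ n, ∫⁻ x, ‖f n x‖ₑ ∂μ = ENNReal.ofReal (∫ x, f n x ∂μ) := fun n ↦ by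
    rw [ofReal_integral_eq_lintegral_ofReal (hf n) (hf_nonneg n)]
    exact lintegral_congr_ae <| (hf_nonneg n).mono fun x hx ↦ Real.enorm_of_nonneg hx
  calc ∫⁻ x, ‖F x‖ₑ ∂μ
      = ∫⁻ x, liminf (fun n ↦ ‖f n x‖ₑ) atTop ∂μ :=
        lintegral_congr_ae <| h_lim.mono fun x hx ↦ hx.enorm.liminf_eq.symm
    _ ≤ liminf (fun n ↦ ∫⁻ x, ‖f n x‖ₑ ∂μ) atTop :=
        lintegral_liminf_le' fun n ↦ (hf n).1.aemeasurable.enorm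
    _ = ENNReal.ofReal L := by
        simp_rw [h_enorm]
        exact ((ENNReal.continuous_ofReal.tendsto L).comp h_int).liminf_eq
    _ < ∞ := ENNReal.ofReal_lt_top

lemma mgf_sq_gaussianReal {t : ℝ} (ht : t < 1 / 2) :
    mgf (fun x ↦ x ^ 2) (gaussianReal 0 1) t = (1 - 2 * t) ^ (-(1 / 2) : ℝ) := by
  have h_pdf : ∀ x : ℝ, gaussianPDFReal 0 1 x • rexp (t * x ^ 2)
      = (√(2 * π))⁻¹ * rexp (-(1 / 2 - t) * x ^ 2) := fun x ↦ by
    rw [gaussianPDFReal_def, smul_eq_mul, mul_assoc, ← exp_add]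
    simp only [NNReal.coe_one, mul_one, sub_zero]
    ring_nf
  have h2t : 0 < 1 - 2 * t := by linarith
  rw [mgf, integral_gaussianReal_eq_integral_smul one_ne_zero]
  simp_rw [h_pdf]
  rw [integral_const_mul, integral_gaussian, rpow_neg h2t.le, ← sqrt_eq_rpow,
    show π / (1 / 2 - t) = 2 * π / (1 - 2 * t) by field_simp, sqrt_div' _ h2t.le]
  have : √(2 * π) ≠ 0 := by positivity
  field_simp

section GaussianSquares

variable {Ω ι : Type*} [MeasurableSpace Ω] {P : Measure Ω} {X : ι → Ω → ℝ}

lemma mgf_sq_of_map_eq_gaussianReal {Y : Ω → ℝ} (hY : Measurable Y)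
    (hlaw : P.map Y = gaussianReal 0 1) {t : ℝ} (ht : t < 1 / 2) :
    mgf (fun ω ↦ Y ω ^ 2) P t = (1 - 2 * t) ^ (-(1 / 2) : ℝ) := by
  rw [← mgf_sq_gaussianReal ht, ← hlaw, mgf_map hY.aemeasurable (by fun_prop)]
  rfl

lemma integral_exp_sum_mul_sq (hmeas : ∀ j, Measurable (X j)) (hindep : iIndepFun X P)
    (hgauss : ∀ j, P.map (X j) = gaussianReal 0 1) {a : ι → ℝ} (ha : ∀ j, 2 * a j < 1)
    (s : Finset ι) :
    ∫ ω, rexp (∑ j ∈ s, a j * X j ω ^ 2) ∂P = rexp (-(1 / 2) * ∑ j ∈ s, log (1 - 2 * a j)) := by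
  have hindep_sq : iIndepFun (fun j ω ↦ a j * X j ω ^ 2) P :=
    hindep.comp (fun j x ↦ a j * x ^ 2) fun j ↦ by fun_prop
  calc ∫ ω, rexp (∑ j ∈ s, a j * X j ω ^ 2) ∂P
      = mgf (∑ j ∈ s, fun ω ↦ a j * X j ω ^ 2) P 1 := by
        simp only [mgf, one_mul, Finset.sum_apply]
    _ = ∏ j ∈ s, mgf (fun ω ↦ X j ω ^ 2) P (a j) := by
        rw [hindep_sq.mgf_sum (fun j ↦ by fun_prop)]
        simp only [mgf_const_mul, mul_one]
    _ = ∏ j ∈ s, (1 - 2 * a j) ^ (-(1 / 2) : ℝ) :=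
        Finset.prod_congr rfl fun j _ ↦
          mgf_sq_of_map_eq_gaussianReal (hmeas j) (hgauss j) (by linarith [ha j])
    _ = rexp (-(1 / 2) * ∑ j ∈ s, log (1 - 2 * a j)) := by
        rw [Finset.mul_sum, exp_sum]
        refine Finset.prod_congr rfl fun j _ ↦ ?_
        rw [rpow_def_of_pos (by linarith [ha j]), mul_comm]

lemma integrable_exp_sum_mul_sq (hmeas : ∀ j, Measurable (X j)) (hindep : iIndepFun X P)
    (hgauss : ∀ j, P.map (X j) = gaussianReal 0 1) {a : ι → ℝ} (ha : ∀ j, 2 * a j < 1)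
    (s : Finset ι) :
    Integrable (fun ω ↦ rexp (∑ j ∈ s, a j * X j ω ^ 2)) P := by
  have := hindep.isProbabilityMeasure
  have h_pos : 0 < mgf (fun ω ↦ ∑ j ∈ s, a j * X j ω ^ 2) P 1 := by
    simp only [mgf, one_mul]
    rw [integral_exp_sum_mul_sq hmeas hindep hgauss ha s]
    exact exp_pos _
  simpa only [one_mul] using mgf_pos_iff.mp h_pos

lemma ae_summable_mul_sq [Countable ι] (hmeas : ∀ j, Measurable (X j))
    (hgauss : ∀ j, P.map (X j) = gaussianReal 0 1) {a : ι → ℝ} (ha : Summable a) :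
    ∀ᵐ ω ∂P, Summable fun j ↦ a j * X j ω ^ 2 := by
  have hK : eLpNorm (fun x : ℝ ↦ x ^ 2) 1 (gaussianReal 0 1) ≠ ∞ :=
    (memLp_one_iff_integrable.mpr (memLp_id_gaussianReal 2).integrable_sq).eLpNorm_ne_top
  have h_norm : ∀ j, eLpNorm (fun ω ↦ a j * X j ω ^ 2) 1 P
      = ‖a j‖ₑ * eLpNorm (fun x : ℝ ↦ x ^ 2) 1 (gaussianReal 0 1) := fun j ↦ by
    rw [show (fun ω ↦ a j * X j ω ^ 2) = a j • fun ω ↦ X j ω ^ 2 from rfl,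
      eLpNorm_const_smul, ← hgauss j, eLpNorm_map_measure (by fun_prop) (hmeas j).aemeasurable]
    rfl
  have h_tsum : ∑' j, eLpNorm (fun ω ↦ a j * X j ω ^ 2) 1 P ≠ ∞ := by
    simp_rw [h_norm]
    rw [ENNReal.tsum_mul_right]
    exact ENNReal.mul_ne_top (tsum_enorm_ne_top_iff_summable_norm.mpr ha.norm) hK
  filter_upwards [summable_norm_of_tsum_eLpNorm_ne_top le_rfl (fun j ↦ by fun_prop) h_tsum]
    with ω hω using hω.of_norm

end GaussianSquares

section GaussianQuadraticForm

variable {Ω : Type*} [MeasurableSpace Ω] {P : Measure Ω} {X : ℕ → Ω → ℝ}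

lemma tendsto_integral_exp_sum_range_mul_sq (hmeas : ∀ j, Measurable (X j))
    (hindep : iIndepFun X P) (hgauss : ∀ j, P.map (X j) = gaussianReal 0 1) {a : ℕ → ℝ}
    (ha : Summable a) (ha_lt : ∀ j, 2 * a j < 1) :
    Tendsto (fun n ↦ ∫ ω, rexp (∑ j ∈ Finset.range n, a j * X j ω ^ 2) ∂P) atTop
      (𝓝 (rexp (-(1 / 2) * ∑' j, log (1 - 2 * a j)))) := by
  simp_rw [integral_exp_sum_mul_sq hmeas hindep hgauss ha_lt]
  have h_log : Summable fun j ↦ log (1 - 2 * a j) := by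
    simpa [sub_eq_add_neg, neg_mul] using Real.summable_log_one_add_of_summable (ha.mul_left (-2))
  exact (h_log.hasSum.tendsto_sum_nat.const_mul _).rexp

lemma ae_tendsto_exp_sum_range_mul_sq (hmeas : ∀ j, Measurable (X j))
    (hgauss : ∀ j, P.map (X j) = gaussianReal 0 1) {a : ℕ → ℝ} (ha : Summable a) :
    ∀ᵐ ω ∂P, Tendsto (fun n ↦ rexp (∑ j ∈ Finset.range n, a j * X j ω ^ 2)) atTop
      (𝓝 (rexp (∑' j, a j * X j ω ^ 2))) := by
  filter_upwards [ae_summable_mul_sq hmeas hgauss ha] with ω hω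
  exact hω.hasSum.tendsto_sum_nat.rexp

lemma integrable_exp_tsum_mul_sq (hmeas : ∀ j, Measurable (X j)) (hindep : iIndepFun X P)
    (hgauss : ∀ j, P.map (X j) = gaussianReal 0 1) {a : ℕ → ℝ} (ha : Summable a)
    (ha_lt : ∀ j, 2 * a j < 1) :
    Integrable (fun ω ↦ rexp (∑' j, a j * X j ω ^ 2)) P :=
  integrable_of_tendsto_ae_of_tendsto_integral
    (fun _ ↦ integrable_exp_sum_mul_sq hmeas hindep hgauss ha_lt _)
    (fun _ ↦ ae_of_all _ fun _ ↦ (exp_pos _).le) (ae_tendsto_exp_sum_range_mul_sq hmeas hgauss ha)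
    (tendsto_integral_exp_sum_range_mul_sq hmeas hindep hgauss ha ha_lt)

theorem integral_exp_tsum_mul_sq (hmeas : ∀ j, Measurable (X j)) (hindep : iIndepFun X P)
    (hgauss : ∀ j, P.map (X j) = gaussianReal 0 1) {a : ℕ → ℝ} (ha : Summable a)
    (ha_lt : ∀ j, 2 * a j < 1) :
    ∫ ω, rexp (∑' j, a j * X j ω ^ 2) ∂P = rexp (-(1 / 2) * ∑' j, log (1 - 2 * a j)) := by
  set b : ℕ → ℝ := fun j ↦ max (a j) 0
  have hb : Summable b := ha.abs.of_nonneg_of_le (fun j ↦ le_max_right _ _)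
    fun j ↦ max_le (le_abs_self _) (abs_nonneg _)
  have hb_lt : ∀ j, 2 * b j < 1 := fun j ↦ by
    rcases le_total (a j) 0 with h | h
    · simp [b, max_eq_right h]
    · simpa [b, max_eq_left h] using ha_lt j
  have h_bound : ∀ n, ∀ᵐ ω ∂P,
      ‖rexp (∑ j ∈ Finset.range n, a j * X j ω ^ 2)‖ ≤ rexp (∑' j, b j * X j ω ^ 2) := by
    intro n
    filter_upwards [ae_summable_mul_sq hmeas hgauss hb] with ω hω
    rw [norm_of_nonneg (exp_pos _).le, exp_le_exp]
    calc ∑ j ∈ Finset.range n, a j * X j ω ^ 2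
        ≤ ∑ j ∈ Finset.range n, b j * X j ω ^ 2 :=
          Finset.sum_le_sum fun j _ ↦ mul_le_mul_of_nonneg_right (le_max_left _ _) (sq_nonneg _)
      _ ≤ ∑' j, b j * X j ω ^ 2 :=
          hω.sum_le_tsum _ fun j _ ↦ mul_nonneg (le_max_right _ _) (sq_nonneg _)
  exact tendsto_nhds_unique
    (tendsto_integral_of_dominated_convergence _
      (fun n ↦ (integrable_exp_sum_mul_sq hmeas hindep hgauss ha_lt _).1)
      (integrable_exp_tsum_mul_sq hmeas hindep hgauss hb hb_lt) h_bound
      (ae_tendsto_exp_sum_range_mul_sq hmeas hgauss ha))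
    (tendsto_integral_exp_sum_range_mul_sq hmeas hindep hgauss ha ha_lt)

end GaussianQuadraticForm

/-- The data are written in the eigenbasis of the trace class operator `D^{1/2} T_t D^{1/2}`,
with eigenvalues `q j`: under `ω`, `x = D^{1/2} y` where `y` has the i.i.d. standard normal
coordinates `X j`, and by the Feldman–Hajek–Shale formula
`ℓ_{ω_t|ω} = (1/2) ∑_j log (1 + q j) - (1/2) ∑_j q j * y_j²`.
The condition `D⁻¹ + α T_t > 0` reads `1 + α q_j > 0`. -/
theorem stmt10_general {Ω : Type*} [MeasurableSpace Ω] (P : Measure Ω)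
    (X : ℕ → Ω → ℝ) (hmeas : ∀ j, Measurable (X j))
    (hindep : iIndepFun X P)
    (hgauss : ∀ j, P.map (X j) = gaussianReal 0 1)
    (q : ℕ → ℝ) (hq : Summable (fun j => |q j|))
    (α : ℝ) (hα : ∀ j, 0 < 1 + α * q j) :
    Real.log (∫ ω, Real.exp (α *
        ((1 / 2) * (∑' j, Real.log (1 + q j)) - (1 / 2) * ∑' j, q j * (X j ω) ^ 2)) ∂P) =
      α / 2 * (∑' j, Real.log (1 + q j)) - (1 / 2) * ∑' j, Real.log (1 + α * q j) := by
  set C := ∑' j, Real.log (1 + q j)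
  have h_split : ∀ ω, rexp (α * ((1 / 2) * C - (1 / 2) * ∑' j, q j * X j ω ^ 2))
      = rexp (α / 2 * C) * rexp (∑' j, (-(α / 2) * q j) * X j ω ^ 2) := fun ω ↦ by
    rw [← exp_add, tsum_congr fun j ↦ mul_assoc _ _ (X j ω ^ 2), tsum_mul_left]
    ring_nf
  have h_log : ∀ j, log (1 - 2 * (-(α / 2) * q j)) = log (1 + α * q j) := fun j ↦ by ring_nf
  simp_rw [h_split, integral_const_mul]
  rw [integral_exp_tsum_mul_sq hmeas hindep hgauss ((summable_abs_iff.mp hq).mul_left _)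
    fun j ↦ by linarith [hα j], ← exp_add, log_exp, tsum_congr h_log]
  ring

/-- The relative Rényi entropy formula
`e_t(α) = log ∫ exp(α ℓ_{ω_t|ω}) dω = (α/2) log det(I + D T_t) − (1/2) log det(I + α D T_t)`
for `α` with `D⁻¹ + α T_t > 0`.  Everything is encoded in the eigenbasis of the
self-adjoint trace class operator `Q = D^{1/2} T_t D^{1/2}` with eigenvalue sequence
`q`: under `ω` (covariance `D`), `x = D^{1/2} y` with `y` standard Gaussian (i.i.d.
standard normal coordinates `X j`), and by the Feldman–Hajek–Shale formula
`ℓ_{ω_t|ω} = (1/2) log det(I + D T_t) − (1/2)(x, T_t x)`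
`= (1/2) ∑_j log(1 + q_j) − (1/2) ∑_j q_j y_j²`.  The condition `ω_t ≃ ω` with
`D_t > 0` reads `1 + q_j > 0`, the condition `D⁻¹ + α T_t > 0` reads
`1 + α q_j > 0`, and `log det(I + α D T_t) = ∑_j log(1 + α q_j)`. -/
theorem stmt10 {Ω : Type*} [MeasurableSpace Ω] (P : Measure Ω) [IsProbabilityMeasure P]
    (X : ℕ → Ω → ℝ) (hmeas : ∀ j, Measurable (X j))
    (hindep : iIndepFun X P)
    (hgauss : ∀ j, P.map (X j) = gaussianReal 0 1)
    (q : ℕ → ℝ) (hq : Summable (fun j => |q j|)) (hpos : ∀ j, 0 < 1 + q j)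
    (α : ℝ) (hα : ∀ j, 0 < 1 + α * q j) :
    Real.log (∫ ω, Real.exp (α *
        ((1 / 2) * (∑' j, Real.log (1 + q j)) - (1 / 2) * ∑' j, q j * (X j ω) ^ 2)) ∂P) =
      α / 2 * (∑' j, Real.log (1 + q j)) - (1 / 2) * ∑' j, Real.log (1 + α * q j) :=
  stmt10_general P X hmeas hindep hgauss q hq α hα
end

section
/- With notation as in the Gaussian setting, if α ∈ ℝ is such that D^{-1} + α T_t is NOT positive (i.e. α ∉ J_t), then ∫ exp(α ℓ_{ω_t|ω}) dω = +∞; i.e. the Rényi entropy e_t(α) = +∞ outside J_t. -/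
/-!
Pick `i` with `α q_i ≤ -1` and split `∑ q_j y_j²` into `q_i y_i²` and the tail over `j ≠ i`.
The tail is a.s. finite (the `q_j` are summable and `E y_j² = 1`), so it is bounded by some
`c` on an event `A` of positive probability, and `A` is independent of `y_i`. On `A` the
integrand is at least a constant times `exp (y_i² / 2)`, whose Gaussian expectation is infinite;
by independence the integral over `A` is `P A * ∞ = ∞`.
-/

open MeasureTheory ProbabilityTheory
open scoped ENNReal NNReal

open Function in
theorem abs_tsum_sub_le_of_tsum_enorm_update_le {β : Type*} [DecidableEq β] (a : β → ℝ) (b : β)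
    {c : ℝ≥0} (h : ∑' j, ‖update a b 0 j‖ₑ ≤ c) :
    |(∑' j, a j) - a b| ≤ c := by
  have hsum : Summable (update a b 0) :=
    (tsum_enorm_ne_top_iff_summable_norm.mp (ne_top_of_le_ne_top ENNReal.coe_ne_top h)).of_norm
  have hle : ‖(∑' j, a j) - a b‖ₑ ≤ c := by
    rw [hsum.tsum_eq_add_tsum_ite' b, add_sub_cancel_left]
    refine le_trans ?_ (enorm_tsum_le_tsum_enorm.trans h)
    simp only [update_apply, le_refl]
  rw [← Real.norm_eq_abs, ← coe_nnnorm, NNReal.coe_le_coe]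
  exact_mod_cast hle

theorem le_mul_half_sub_of_abs_sub_le {α q y S K c : ℝ} (hαq : 1 + α * q ≤ 0)
    (hS : |S - q * y ^ 2| ≤ c) :
    α * (1 / 2 * K) - |α| * c / 2 + y ^ 2 / 2 ≤ α * (1 / 2 * K - 1 / 2 * S) := by
  have hαS : α * (S - q * y ^ 2) ≤ |α| * c := calc
    α * (S - q * y ^ 2) ≤ |α| * |S - q * y ^ 2| := (le_abs_self _).trans (abs_mul _ _).le
    _ ≤ |α| * c := by gcongr
  nlinarith [mul_nonneg (by linarith : 0 ≤ -(α * q) - 1) (sq_nonneg y)]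

theorem ae_tsum_enorm_mul_ne_top {Ω ι : Type*} [Countable ι] [MeasurableSpace Ω]
    {P : Measure Ω} {Y : ι → Ω → ℝ} (hY : ∀ j, AEMeasurable (Y j) P) {M : ℝ≥0∞}
    (hM : ∀ j, ∫⁻ ω, ‖Y j ω‖ₑ ∂P ≤ M) (hM_top : M ≠ ∞) {q : ι → ℝ}
    (hq : Summable fun j => ‖q j‖) :
    ∀ᵐ ω ∂P, ∑' j, ‖q j * Y j ω‖ₑ ≠ ∞ := by
  refine ae_lt_top' (AEMeasurable.tsum fun j => ((hY j).const_mul _).enorm) ?_ |>.mono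
    fun _ h => h.ne
  rw [lintegral_tsum fun j => ((hY j).const_mul _).enorm]
  simp_rw [enorm_mul, lintegral_const_mul' _ _ enorm_ne_top]
  refine ne_top_of_le_ne_top ?_ (ENNReal.tsum_le_tsum fun j => mul_le_mul_right (hM j) _)
  rw [ENNReal.tsum_mul_right]
  exact ENNReal.mul_ne_top (tsum_enorm_ne_top_iff_summable_norm.mpr hq) hM_top

theorem ae_tsum_enorm_mul_sq_ne_top_of_map_eq_gaussianReal {Ω ι : Type*} [Countable ι]
    [MeasurableSpace Ω] {P : Measure Ω} {X : ι → Ω → ℝ} (hX : ∀ j, Measurable (X j))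
    {μ : ℝ} {v : ℝ≥0} (hgauss : ∀ j, P.map (X j) = gaussianReal μ v) {q : ι → ℝ}
    (hq : Summable fun j => ‖q j‖) :
    ∀ᵐ ω ∂P, ∑' j, ‖q j * X j ω ^ 2‖ₑ ≠ ∞ := by
  have hmoment : ∀ j, ∫⁻ ω, ‖X j ω ^ 2‖ₑ ∂P = ∫⁻ x, ‖x ^ 2‖ₑ ∂gaussianReal μ v := fun j => by
    rw [← hgauss j, lintegral_map (by fun_prop) (hX j)]
  exact ae_tsum_enorm_mul_ne_top (fun j => ((hX j).pow_const 2).aemeasurable)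
    (fun j => (hmoment j).le) (memLp_id_gaussianReal 2).integrable_sq.hasFiniteIntegral.ne hq

theorem exists_nat_measure_setOf_le_ne_zero {Ω : Type*} [MeasurableSpace Ω] {P : Measure Ω}
    [NeZero P] {T : Ω → ℝ≥0∞} (hT : ∀ᵐ ω ∂P, T ω ≠ ∞) :
    ∃ c : ℕ, P {ω | T ω ≤ c} ≠ 0 := by
  by_contra! h
  have hnot : ∀ᵐ ω ∂P, ω ∉ ⋃ c : ℕ, {ω | T ω ≤ c} :=
    measure_eq_zero_iff_ae_notMem.mp (measure_iUnion_null h)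
  have hfalse : ∀ᵐ _ ∂P, False := by
    filter_upwards [hT, hnot] with ω hω hω'
    obtain ⟨c, hc⟩ := ENNReal.exists_nat_gt hω
    exact hω' (Set.mem_iUnion.mpr ⟨c, hc.le⟩)
  exact NeZero.ne P (ae_eq_bot.mp (Filter.eventually_false_iff_eq_bot.mp hfalse))

theorem setLIntegral_eq_measure_mul_lintegral_of_indep {Ω : Type*} {m₁ m₂ m : MeasurableSpace Ω}
    {P : Measure Ω} (h₁ : m₁ ≤ m) (h₂ : m₂ ≤ m) (hind : Indep m₁ m₂ P) {f : Ω → ℝ≥0∞}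
    (hf : Measurable[m₁] f) {A : Set Ω} (hA : MeasurableSet[m₂] A) :
    ∫⁻ ω in A, f ω ∂P = P A * ∫⁻ ω, f ω ∂P := by
  have hAind : Measurable[m₂] (A.indicator fun _ => (1 : ℝ≥0∞)) :=
    measurable_const.indicator hA
  calc ∫⁻ ω in A, f ω ∂P = ∫⁻ ω, f ω * A.indicator (fun _ => 1) ω ∂P := by
        rw [← lintegral_indicator (h₂ _ hA)]
        congr 1 with ω
        by_cases hω : ω ∈ A <;> simp [hω]
    _ = (∫⁻ ω, f ω ∂P) * ∫⁻ ω, A.indicator (fun _ => 1) ω ∂P :=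
        lintegral_mul_eq_lintegral_mul_lintegral_of_independent_measurableSpace h₁ h₂ hind hf hAind
    _ = P A * ∫⁻ ω, f ω ∂P := by rw [lintegral_indicator_const (h₂ _ hA), one_mul, mul_comm]

theorem measurable_biSup_comap_of_mem {Ω ι β : Type*} [MeasurableSpace β] {X : ι → Ω → β}
    {s : Set ι} {j : ι} (hj : j ∈ s) :
    Measurable[⨆ j ∈ s, MeasurableSpace.comap (X j) inferInstance] (X j) :=
  (comap_measurable (X j)).mono
    (le_iSup₂ (f := fun j (_ : j ∈ s) => MeasurableSpace.comap (X j) inferInstance) j hj) le_rfl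

open Function in
theorem measurable_biSup_comap_compl_tsum_enorm_update {Ω ι β : Type*} [Countable ι]
    [DecidableEq ι] [MeasurableSpace β] {X : ι → Ω → β} {f : ι → β → ℝ}
    (hf : ∀ j, Measurable (f j)) (i : ι) :
    Measurable[⨆ j ∈ ({i} : Set ι)ᶜ, MeasurableSpace.comap (X j) inferInstance]
      fun ω => ∑' j, ‖update (fun j => f j (X j ω)) i 0 j‖ₑ := by
  let : MeasurableSpace Ω := ⨆ j ∈ ({i} : Set ι)ᶜ, MeasurableSpace.comap (X j) inferInstance
  refine Measurable.tsum fun j => ?_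
  rcases eq_or_ne j i with rfl | hj
  · simp only [update_self, enorm_zero, measurable_const]
  · have hXj := measurable_biSup_comap_of_mem (X := X) (Set.mem_compl_singleton_iff.mpr hj)
    simp only [update_of_ne hj]
    exact ((hf j).comp hXj).enorm

theorem ProbabilityTheory.iIndepFun.setLIntegral_comp_eq_measure_mul_lintegral
    {Ω ι β : Type*} [MeasurableSpace Ω] [MeasurableSpace β] {P : Measure Ω} {X : ι → Ω → β}
    (hX : ∀ j, Measurable (X j)) (hind : iIndepFun X P) (i : ι) {g : β → ℝ≥0∞}
    (hg : Measurable g) {A : Set Ω}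
    (hA : MeasurableSet[⨆ j ∈ ({i} : Set ι)ᶜ, MeasurableSpace.comap (X j) inferInstance] A) :
    ∫⁻ ω in A, g (X i ω) ∂P = P A * ∫⁻ ω, g (X i ω) ∂P := by
  have hindi := indep_biSup_compl (fun j => (hX j).comap_le) hind.iIndep {i}
  rw [iSup_singleton] at hindi
  exact setLIntegral_eq_measure_mul_lintegral_of_indep (hX i).comap_le
    (iSup₂_le fun j _ => (hX j).comap_le) hindi (hg.comp (comap_measurable (X i))) hA

theorem ProbabilityTheory.iIndepFun.lintegral_eq_top_of_const_mul_le_on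
    {Ω ι β : Type*} [MeasurableSpace Ω] [MeasurableSpace β] {P : Measure Ω} {X : ι → Ω → β}
    (hX : ∀ j, Measurable (X j)) (hind : iIndepFun X P) (i : ι) {g : β → ℝ≥0∞}
    (hg : Measurable g) (hg_top : ∫⁻ ω, g (X i ω) ∂P = ∞) {A : Set Ω}
    (hA : MeasurableSet[⨆ j ∈ ({i} : Set ι)ᶜ, MeasurableSpace.comap (X j) inferInstance] A)
    (hPA : P A ≠ 0) {C : ℝ≥0∞} (hC : C ≠ 0) {F : Ω → ℝ≥0∞}
    (hF : ∀ ω ∈ A, C * g (X i ω) ≤ F ω) :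
    ∫⁻ ω, F ω ∂P = ∞ := by
  refine eq_top_iff.mpr ?_
  calc ∞ = ∫⁻ ω in A, C * g (X i ω) ∂P := by
        rw [lintegral_const_mul C (f := fun ω => g (X i ω)) (hg.comp (hX i)),
          hind.setLIntegral_comp_eq_measure_mul_lintegral hX i hg hA, hg_top,
          ENNReal.mul_top hPA, ENNReal.mul_top hC]
    _ ≤ ∫⁻ ω in A, F ω ∂P :=
        setLIntegral_mono' (iSup₂_le (fun j _ => (hX j).comap_le) _ hA) hF
    _ ≤ ∫⁻ ω, F ω ∂P := setLIntegral_le_lintegral _ _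

theorem lintegral_exp_sq_div_gaussianReal_eq_top (μ : ℝ) {v : ℝ≥0} (hv : v ≠ 0) :
    ∫⁻ x, ENNReal.ofReal (Real.exp ((x - μ) ^ 2 / (2 * v))) ∂gaussianReal μ v = ∞ := by
  rw [gaussianReal_of_var_ne_zero μ hv,
    lintegral_withDensity_eq_lintegral_mul _ (measurable_gaussianPDF μ v) (by fun_prop)]
  have hconst : ∀ x, (gaussianPDF μ v * fun x => ENNReal.ofReal (Real.exp ((x - μ) ^ 2 / (2 * v))))
      x = ENNReal.ofReal (Real.sqrt (2 * Real.pi * v))⁻¹ := by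
    intro x
    rw [Pi.mul_apply, gaussianPDF, ← ENNReal.ofReal_mul (gaussianPDFReal_nonneg _ _ _),
      gaussianPDFReal, mul_assoc, ← Real.exp_add, neg_div, neg_add_cancel, Real.exp_zero, mul_one]
  rw [lintegral_congr hconst, lintegral_const, Real.volume_univ, ENNReal.mul_top]
  have hv' : (0 : ℝ) < v := by positivity
  exact (ENNReal.ofReal_pos.mpr (by positivity)).ne'

/-- The problem is encoded in the eigenbasis of `Q = D^{1/2} T_t D^{1/2}` with eigenvalues `q_j`,
so that `ℓ_{ω_t|ω} = (1/2) ∑_j log(1 + q_j) − (1/2) ∑_j q_j y_j²` with `y_j = X j` i.i.d. standard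
normal; since the `q_j` accumulate only at `0`, failure of positivity of `D⁻¹ + α T_t` means
`1 + α q_j ≤ 0` for some `j`. -/
theorem stmt11_general {Ω : Type*} [MeasurableSpace Ω] (P : Measure Ω) [IsProbabilityMeasure P]
    (X : ℕ → Ω → ℝ) (hmeas : ∀ j, Measurable (X j))
    (hindep : iIndepFun X P)
    (hgauss : ∀ j, P.map (X j) = gaussianReal 0 1)
    (q : ℕ → ℝ) (hq : Summable (fun j => |q j|))
    (α : ℝ) (hbad : ∃ j, 1 + α * q j ≤ 0) :
    ∫⁻ ω, ENNReal.ofReal (Real.exp (α *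
        ((1 / 2) * (∑' j, Real.log (1 + q j)) - (1 / 2) * ∑' j, q j * (X j ω) ^ 2))) ∂P
      = ⊤ := by
  obtain ⟨i, hi⟩ := hbad
  set K := ∑' j, Real.log (1 + q j)
  set T : Ω → ℝ≥0∞ := fun ω => ∑' j, ‖Function.update (fun j => q j * X j ω ^ 2) i 0 j‖ₑ
  have hT_meas : Measurable[⨆ j ∈ ({i} : Set ℕ)ᶜ, MeasurableSpace.comap (X j) inferInstance] T :=
    measurable_biSup_comap_compl_tsum_enorm_update (f := fun j x => q j * x ^ 2)
      (fun j => by fun_prop) i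
  have hT_fin : ∀ᵐ ω ∂P, T ω ≠ ∞ := by
    filter_upwards [ae_tsum_enorm_mul_sq_ne_top_of_map_eq_gaussianReal hmeas hgauss
      (q := q) (by simpa only [Real.norm_eq_abs] using hq)] with ω hω
    refine ne_top_of_le_ne_top hω (ENNReal.tsum_le_tsum fun j => ?_)
    rcases eq_or_ne j i with rfl | hj
    · simp
    · simp [Function.update_of_ne hj]
  obtain ⟨c, hc⟩ := exists_nat_measure_setOf_le_ne_zero hT_fin
  have hY_top : ∫⁻ ω, ENNReal.ofReal (Real.exp (X i ω ^ 2 / 2)) ∂P = ∞ := by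
    rw [← lintegral_map (f := fun x => ENNReal.ofReal (Real.exp (x ^ 2 / 2))) (by fun_prop)
      (hmeas i), hgauss i]
    simpa using lintegral_exp_sq_div_gaussianReal_eq_top 0 one_ne_zero
  refine hindep.lintegral_eq_top_of_const_mul_le_on hmeas i
    (g := fun x => ENNReal.ofReal (Real.exp (x ^ 2 / 2))) (by fun_prop) hY_top
    (measurableSet_le hT_meas measurable_const) hc
    (C := ENNReal.ofReal (Real.exp (α * (1 / 2 * K) - |α| * c / 2)))
    (ENNReal.ofReal_pos.mpr (Real.exp_pos _)).ne' fun ω hω => ?_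
  rw [← ENNReal.ofReal_mul (Real.exp_pos _).le, ← Real.exp_add]
  exact ENNReal.ofReal_le_ofReal (Real.exp_le_exp.mpr (le_mul_half_sub_of_abs_sub_le hi
    (by exact_mod_cast abs_tsum_sub_le_of_tsum_enorm_update_le _ i (c := c) hω)))

/-- If `α ∉ J_t`, i.e. `D⁻¹ + α T_t` is not positive definite, then
`∫ exp(α ℓ_{ω_t|ω}) dω = +∞`.  As in the formula for `e_t(α)`, everything is encoded
in the eigenbasis of `Q = D^{1/2} T_t D^{1/2}` with eigenvalues `q_j` (so that
`ℓ_{ω_t|ω} = (1/2) ∑_j log(1 + q_j) − (1/2) ∑_j q_j y_j²` with `y_j = X j` i.i.d.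
standard normal); since the `q_j` accumulate only at `0`, failure of positivity of
`D⁻¹ + α T_t` means `1 + α q_j ≤ 0` for some `j`. -/
theorem stmt11 {Ω : Type*} [MeasurableSpace Ω] (P : Measure Ω) [IsProbabilityMeasure P]
    (X : ℕ → Ω → ℝ) (hmeas : ∀ j, Measurable (X j))
    (hindep : iIndepFun X P)
    (hgauss : ∀ j, P.map (X j) = gaussianReal 0 1)
    (q : ℕ → ℝ) (hq : Summable (fun j => |q j|)) (hpos : ∀ j, 0 < 1 + q j)
    (α : ℝ) (hbad : ∃ j, 1 + α * q j ≤ 0) :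
    ∫⁻ ω, ENNReal.ofReal (Real.exp (α *
        ((1 / 2) * (∑' j, Real.log (1 + q j)) - (1 / 2) * ∑' j, q j * (X j ω) ^ 2))) ∂P
      = ⊤ :=
  stmt11_general P X hmeas hindep hgauss q hq α hbad
end

section
/- The finite-time Evans–Searles symmetry holds: for any t ∈ ℝ and α ∈ ℝ, e_t(1−α) = e_{−t}(α), where e_t(α) = log ∫ exp(α ℓ_{ω_t|ω}) dω. If additionally there is a unitary involution θ with θL = −Lθ, θD = Dθ, then e_{−t}(α) = e_t(α), hence e_t(1−α) = e_t(α). -/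
open MeasureTheory ENNReal

/-- The finite-time Rényi entropy functional `e_t(α) = log ∫ exp(α ℓ_{ω_t|ω}) dω`
`= log ∫ (dω_t/dω)^α dω ∈ (−∞, +∞]`, where `ω_t = ω ∘ φ^{−t}` is the pushforward of
the reference measure `ω = μ` by the flow `φ^t`. -/
noncomputable def eEnt {X : Type*} [MeasurableSpace X] (μ : Measure X) (φ : ℝ → X → X)
    (t α : ℝ) : EReal :=
  ENNReal.log (∫⁻ x, (μ.map (φ t)).rnDeriv μ x ^ α ∂μ)

section aux

variable {X : Type*} [MeasurableSpace X]

lemma flow_inv_comp {φ : ℝ → X → X} (hgrp : ∀ s t : ℝ, φ (s + t) = φ s ∘ φ t)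
    (hid : φ 0 = id) (t : ℝ) : φ (-t) ∘ φ t = id := by
  rw [← hgrp, neg_add_cancel, hid]

/-- The flow at time `t` as a measurable equivalence. -/
noncomputable def flowEquiv (φ : ℝ → X → X) (hmeas : ∀ t, Measurable (φ t))
    (hgrp : ∀ s t : ℝ, φ (s + t) = φ s ∘ φ t) (hid : φ 0 = id) (t : ℝ) : X ≃ᵐ X where
  toFun := φ t
  invFun := φ (-t)
  left_inv := fun x => congrFun (flow_inv_comp hgrp hid t) x
  right_inv := fun x => by
    have := congrFun (flow_inv_comp hgrp hid (-t)) x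
    rwa [neg_neg] at this
  measurable_toFun := hmeas t
  measurable_invFun := hmeas (-t)

end aux

/-- Finite-time Evans–Searles symmetry: for the measurable flow
`φ` with `ω_t = ω ∘ φ^{−t} ≃ ω`, one has `e_t(1−α) = e_{−t}(α)` for all `t, α`.
If additionally there is a measurable involution `Θ` implementing time reversal
(`Θ` preserves `ω` and `Θ ∘ φ^t = φ^{−t} ∘ Θ`, which holds for the unitary involution
`θ` with `θL = −Lθ`, `θD = Dθ`), then `e_{−t}(α) = e_t(α)`, hence
`e_t(1−α) = e_t(α)`. -/
theorem stmt12 {X : Type*} [MeasurableSpace X] (μ : Measure X) [IsProbabilityMeasure μ]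
    (φ : ℝ → X → X) (hmeas : ∀ t, Measurable (φ t))
    (hgrp : ∀ s t : ℝ, φ (s + t) = φ s ∘ φ t) (hid : φ 0 = id)
    (hequiv : ∀ t : ℝ, μ.map (φ t) ≪ μ ∧ μ ≪ μ.map (φ t)) :
    (∀ t α : ℝ, eEnt μ φ t (1 - α) = eEnt μ φ (-t) α) ∧
    (∀ Θ : X → X, Measurable Θ → Θ ∘ Θ = id → μ.map Θ = μ →
      (∀ t : ℝ, Θ ∘ φ t = φ (-t) ∘ Θ) →
      ∀ t α : ℝ, eEnt μ φ (-t) α = eEnt μ φ t α ∧ eEnt μ φ t (1 - α) = eEnt μ φ t α) := by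
  -- notation
  set ν : ℝ → Measure X := fun t => μ.map (φ t) with hν
  have hprob : ∀ t, IsProbabilityMeasure (ν t) :=
    fun t => Measure.isProbabilityMeasure_map (hmeas t).aemeasurable
  have hfmeas : ∀ t, Measurable ((ν t).rnDeriv μ) := fun t => Measure.measurable_rnDeriv _ _
  have hmapinv : ∀ t, (ν t).map (φ (-t)) = μ := by
    intro t
    rw [hν, Measure.map_map (hmeas (-t)) (hmeas t), flow_inv_comp hgrp hid t, Measure.map_id]
  -- key a.e. identity : f_{-t} = (f_t ∘ φ t)⁻¹
  have key : ∀ t : ℝ, (ν (-t)).rnDeriv μ =ᵐ[μ] fun x => ((ν t).rnDeriv μ (φ t x))⁻¹ := by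
    intro t
    have := Measure.isProbabilityMeasure_map (μ := μ) (hmeas t).aemeasurable
    have := Measure.isProbabilityMeasure_map (μ := μ) (hmeas (-t)).aemeasurable
    have hemb : MeasurableEmbedding (φ t) :=
      (flowEquiv φ hmeas hgrp hid t).measurableEmbedding
    -- rnDeriv_map with f = φ t, measures ν (-t) and μ
    have h1 : (fun x => ((ν (-t)).map (φ t)).rnDeriv (μ.map (φ t)) (φ t x))
        =ᵐ[μ] (ν (-t)).rnDeriv μ := hemb.rnDeriv_map (ν (-t)) μ
    have hmap : (ν (-t)).map (φ t) = μ := by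
      have := hmapinv (-t); rwa [neg_neg] at this
    rw [hmap] at h1
    -- so f_{-t} = (μ.rnDeriv (ν t)) ∘ φ t
    -- and μ.rnDeriv (ν t) =ᵐ[μ] (f_t)⁻¹
    have h2 : (fun x => ((ν t).rnDeriv μ x)⁻¹) =ᵐ[μ] μ.rnDeriv (ν t) :=
      Measure.inv_rnDeriv' (hequiv t).2
    -- transfer to a.e. (ν t), then pull back along φ t
    have h2' : (fun x => ((ν t).rnDeriv μ x)⁻¹) =ᵐ[ν t] μ.rnDeriv (ν t) :=
      h2.filter_mono (hequiv t).1.ae_le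
    have h3 : (fun x => ((ν t).rnDeriv μ (φ t x))⁻¹) =ᵐ[μ]
        fun x => μ.rnDeriv (ν t) (φ t x) :=
      h2'.comp_tendsto (Measure.tendsto_ae_map (hmeas t).aemeasurable)
    exact h1.symm.trans h3.symm
  -- Main integral identity (part 1)
  have main : ∀ t α : ℝ,
      (∫⁻ x, (ν t).rnDeriv μ x ^ (1 - α) ∂μ) = ∫⁻ x, (ν (-t)).rnDeriv μ x ^ α ∂μ := by
    intro t α
    have := hprob t
    -- rewrite μ as withDensity of ν t
    have hwd : (ν t).withDensity (μ.rnDeriv (ν t)) = μ :=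
      Measure.withDensity_rnDeriv_eq μ (ν t) (hequiv t).2
    have hmeas_pow : Measurable fun x => (ν t).rnDeriv μ x ^ (1 - α) :=
      (ENNReal.continuous_rpow_const.measurable).comp (hfmeas t)
    calc (∫⁻ x, (ν t).rnDeriv μ x ^ (1 - α) ∂μ)
        = ∫⁻ x, (μ.rnDeriv (ν t) * fun x => (ν t).rnDeriv μ x ^ (1 - α)) x ∂(ν t) := by
          rw [← lintegral_withDensity_eq_lintegral_mul (ν t)
            (Measure.measurable_rnDeriv _ _) hmeas_pow, hwd]
      _ = ∫⁻ x, (ν t).rnDeriv μ x ^ (-α) ∂(ν t) := by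
          refine lintegral_congr_ae ?_
          have hpos : ∀ᵐ x ∂(ν t), 0 < (ν t).rnDeriv μ x :=
            Measure.rnDeriv_pos (hequiv t).1
          have hlt : ∀ᵐ x ∂(ν t), (ν t).rnDeriv μ x < ∞ :=
            (hequiv t).1.ae_le (Measure.rnDeriv_lt_top (ν t) μ)
          have hinv : μ.rnDeriv (ν t) =ᵐ[ν t] fun x => ((ν t).rnDeriv μ x)⁻¹ :=
            ((Measure.inv_rnDeriv' (hequiv t).2).filter_mono (hequiv t).1.ae_le).symm
          filter_upwards [hpos, hlt, hinv] with x hx0 hxt hxi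
          simp only [Pi.mul_apply, hxi]
          rw [← ENNReal.rpow_neg_one, ← ENNReal.rpow_add _ _ hx0.ne' hxt.ne]
          congr 1; ring
      _ = ∫⁻ x, (ν t).rnDeriv μ (φ t x) ^ (-α) ∂μ := by
          have hm2 : Measurable fun x => (ν t).rnDeriv μ x ^ (-α) :=
            (ENNReal.continuous_rpow_const.measurable).comp (hfmeas t)
          rw [show ν t = μ.map (φ t) from rfl, lintegral_map hm2 (hmeas t)]
      _ = ∫⁻ x, (ν (-t)).rnDeriv μ x ^ α ∂μ := by
          refine lintegral_congr_ae ?_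
          filter_upwards [key t] with x hx
          rw [hx, ENNReal.inv_rpow, ← ENNReal.rpow_neg]
  refine ⟨fun t α => congrArg ENNReal.log (main t α), ?_⟩
  intro Θ hΘm hΘinv hΘμ hΘφ t α
  -- time reversal : ν (-t) = (ν t).map Θ
  have hrev : ν (-t) = (ν t).map Θ := by
    show μ.map (φ (-t)) = (μ.map (φ t)).map Θ
    have : φ (-t) ∘ Θ ∘ Θ = Θ ∘ φ t ∘ Θ := by
      rw [← Function.comp_assoc, ← hΘφ t, Function.comp_assoc]
    rw [hΘinv] at this
    simp only [Function.comp_id] at this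
    rw [this, ← Measure.map_map hΘm ((hmeas t).comp hΘm),
      ← Measure.map_map (hmeas t) hΘm, hΘμ]
  have hΘemb : MeasurableEmbedding Θ := by
    have : Function.Bijective Θ := Function.bijective_iff_has_inverse.2
      ⟨Θ, fun x => congrFun hΘinv x, fun x => congrFun hΘinv x⟩
    exact (MeasurableEquiv.mk (Equiv.mk Θ Θ (fun x => congrFun hΘinv x)
      (fun x => congrFun hΘinv x)) hΘm hΘm).measurableEmbedding
  have hcompΘ : (fun x => (ν (-t)).rnDeriv μ (Θ x)) =ᵐ[μ] (ν t).rnDeriv μ := by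
    have h1 : (fun x => (((ν t).map Θ).rnDeriv (μ.map Θ)) (Θ x)) =ᵐ[μ] (ν t).rnDeriv μ :=
      hΘemb.rnDeriv_map (ν t) μ
    rw [hΘμ, ← hrev] at h1
    exact h1
  have hneg : (∫⁻ x, (ν (-t)).rnDeriv μ x ^ α ∂μ) = ∫⁻ x, (ν t).rnDeriv μ x ^ α ∂μ := by
    calc (∫⁻ x, (ν (-t)).rnDeriv μ x ^ α ∂μ)
        = ∫⁻ x, (ν (-t)).rnDeriv μ x ^ α ∂(μ.map Θ) := by rw [hΘμ]
      _ = ∫⁻ x, (ν (-t)).rnDeriv μ (Θ x) ^ α ∂μ := by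
          have hm3 : Measurable fun x => (ν (-t)).rnDeriv μ x ^ α :=
            (ENNReal.continuous_rpow_const.measurable).comp (hfmeas (-t))
          rw [lintegral_map hm3 hΘm]
      _ = ∫⁻ x, (ν t).rnDeriv μ x ^ α ∂μ := by
          refine lintegral_congr_ae ?_
          filter_upwards [hcompΘ] with x hx
          rw [hx]
  refine ⟨congrArg ENNReal.log hneg, ?_⟩
  have h1 : eEnt μ φ t (1 - α) = eEnt μ φ (-t) α := congrArg ENNReal.log (main t α)
  rw [h1]
  exact congrArg ENNReal.log hneg
end

section
/- Convexity of Rényi entropy: for any two equivalent probability measures ν ≪≫ ω, the function α ↦ log ∫ (dν/dω)^α dω, with values in (−∞,+∞], is convex on ℝ, vanishes at α = 0 and α = 1, is nonpositive on [0,1] and nonnegative outside [0,1]. -/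
/-!
Hölder's inequality with exponents `1/θ` and `1/(1-θ)`, applied to `f ^ (θ a)` and
`f ^ ((1-θ) b)` for `f = dν/dω`, shows that `F α = ∫ f ^ α dω` is log-convex; mutual
absolute continuity makes `f` a.e. positive and finite, which is what splits
`f ^ (θ a + (1-θ) b)` into that product. Since `F 0 = ω(Ω) = 1` and `F 1 = ν(Ω) = 1`,
log-convexity forces `F ≤ 1` between `0` and `1`. Outside `[0,1]`, one of the points
`0, 1` is a strict convex combination of `α` and the other, and log-convexity there gives
`1 ≤ F α ^ θ`, hence `1 ≤ F α`.
-/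

open MeasureTheory
open scoped ENNReal

noncomputable def renyiEnt {Ω : Type*} [MeasurableSpace Ω] (ν ω : Measure Ω) (α : ℝ) :
    EReal :=
  ENNReal.log (∫⁻ x, ν.rnDeriv ω x ^ α ∂ω)

def IsLogConvex (F : ℝ → ℝ≥0∞) : Prop :=
  ∀ a b θ : ℝ, 0 < θ → θ < 1 → F (θ * a + (1 - θ) * b) ≤ F a ^ θ * F b ^ (1 - θ)

namespace IsLogConvex

variable {F : ℝ → ℝ≥0∞}

theorem log_le (hF : IsLogConvex F) (a b : ℝ) {θ : ℝ} (h0 : 0 ≤ θ) (h1 : θ ≤ 1) :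
    ENNReal.log (F (θ * a + (1 - θ) * b)) ≤
      (θ : EReal) * ENNReal.log (F a) + ((1 - θ : ℝ) : EReal) * ENNReal.log (F b) := by
  rcases h0.eq_or_lt with rfl | h0
  · simp
  rcases h1.eq_or_lt with rfl | h1
  · simp
  calc ENNReal.log (F (θ * a + (1 - θ) * b))
      ≤ ENNReal.log (F a ^ θ * F b ^ (1 - θ)) := ENNReal.log_monotone (hF a b θ h0 h1)
    _ = _ := by rw [ENNReal.log_mul_add, ENNReal.log_rpow, ENNReal.log_rpow]

theorem le_one_of_mem_Icc (hF : IsLogConvex F) (hF0 : F 0 = 1) (hF1 : F 1 = 1) {α : ℝ}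
    (hα : α ∈ Set.Icc (0 : ℝ) 1) : F α ≤ 1 := by
  rcases hα.1.eq_or_lt with rfl | h0
  · exact hF0.le
  rcases hα.2.eq_or_lt with rfl | h1
  · exact hF1.le
  simpa [hF0, hF1] using hF 1 0 α h0 h1

theorem one_le_of_eq_one (hF : IsLogConvex F) {a b θ : ℝ} (h0 : 0 < θ) (h1 : θ < 1)
    (hb : F b = 1) (hab : F (θ * a + (1 - θ) * b) = 1) : 1 ≤ F a := by
  have h := hF a b θ h0 h1
  rw [hab, hb, ENNReal.one_rpow, mul_one] at h
  exact not_lt.1 fun ha => (ENNReal.rpow_lt_one ha h0).not_ge h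

theorem one_le_of_notMem_Icc (hF : IsLogConvex F) (hF0 : F 0 = 1) (hF1 : F 1 = 1) {α : ℝ}
    (hα : α ∉ Set.Icc (0 : ℝ) 1) : 1 ≤ F α := by
  rcases not_and_or.1 hα with hα | hα <;> rw [not_le] at hα
  · -- `0 = θ α + (1 - θ) 1` for `θ = 1 / (1 - α)`
    refine hF.one_le_of_eq_one (b := 1) (θ := 1 / (1 - α)) (by bound)
      ((div_lt_one (by linarith)).2 (by linarith)) hF1 ?_
    convert hF0 using 2
    field_simp [(by linarith : 0 < 1 - α).ne']
    ring
  · -- `1 = θ α + (1 - θ) 0` for `θ = 1 / α`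
    refine hF.one_le_of_eq_one (b := 0) (θ := 1 / α) (by bound)
      ((div_lt_one (by linarith)).2 hα) hF0 ?_
    convert hF1 using 2
    field_simp
    ring

end IsLogConvex

theorem isLogConvex_lintegral_rpow {Ω : Type*} [MeasurableSpace Ω] {μ : Measure Ω}
    {f : Ω → ℝ≥0∞} (hf : AEMeasurable f μ) (hf0 : ∀ᵐ x ∂μ, f x ≠ 0)
    (hftop : ∀ᵐ x ∂μ, f x ≠ ∞) :
    IsLogConvex fun α => ∫⁻ x, f x ^ α ∂μ := by
  intro a b θ h0 h1
  have hpq : Real.HolderConjugate θ⁻¹ (1 - θ)⁻¹ := by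
    simpa using Real.holderConjugate_one_div h0 (sub_pos.2 h1) (by ring)
  have holder := ENNReal.lintegral_mul_le_Lp_mul_Lq μ hpq
    (hf.pow_const (θ * a)) (hf.pow_const ((1 - θ) * b))
  have hsplit : ∫⁻ x, f x ^ (θ * a + (1 - θ) * b) ∂μ
      = ∫⁻ x, (fun x => f x ^ (θ * a)) x * (fun x => f x ^ ((1 - θ) * b)) x ∂μ :=
    lintegral_congr_ae <| by
      filter_upwards [hf0, hftop] with x hx hx' using ENNReal.rpow_add _ _ hx hx'
  have hpow (c s : ℝ) (hs : s ≠ 0) (x : Ω) : (f x ^ (s * c)) ^ s⁻¹ = f x ^ c := by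
    rw [← ENNReal.rpow_mul, mul_comm s, mul_assoc, mul_inv_cancel₀ hs, mul_one]
  simp only [hpow a θ h0.ne', hpow b (1 - θ) (sub_pos.2 h1).ne', one_div, inv_inv] at holder
  exact hsplit.trans_le holder

/-- For mutually absolutely continuous probability measures `ν ≃ ω`,
the function `α ↦ log ∫ (dν/dω)^α dω`, with values in `(−∞, +∞]`, is convex on `ℝ`,
vanishes at `α = 0` and `α = 1`, is nonpositive on `[0,1]` and nonnegative outside
`[0,1]`. -/
theorem stmt13 {Ω : Type*} [MeasurableSpace Ω] (ν ω : Measure Ω)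
    [IsProbabilityMeasure ν] [IsProbabilityMeasure ω]
    (hνω : ν ≪ ω) (hων : ω ≪ ν) :
    (∀ a b θ : ℝ, 0 ≤ θ → θ ≤ 1 →
      renyiEnt ν ω (θ * a + (1 - θ) * b) ≤
        (θ : EReal) * renyiEnt ν ω a + ((1 - θ : ℝ) : EReal) * renyiEnt ν ω b) ∧
    renyiEnt ν ω 0 = 0 ∧ renyiEnt ν ω 1 = 0 ∧
    (∀ α ∈ Set.Icc (0 : ℝ) 1, renyiEnt ν ω α ≤ 0) ∧
    (∀ α : ℝ, α ∉ Set.Icc (0 : ℝ) 1 → 0 ≤ renyiEnt ν ω α) := by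
  set F : ℝ → ℝ≥0∞ := fun α => ∫⁻ x, ν.rnDeriv ω x ^ α ∂ω
  have hF : IsLogConvex F := isLogConvex_lintegral_rpow
    (Measure.measurable_rnDeriv ν ω).aemeasurable
    ((Measure.rnDeriv_pos' hων).mono fun _ hx => hx.ne') (Measure.rnDeriv_ne_top ν ω)
  have hF0 : F 0 = 1 := by simp [F]
  have hF1 : F 1 = 1 := by simp [F, Measure.lintegral_rnDeriv hνω]
  have hent (α : ℝ) : renyiEnt ν ω α = ENNReal.log (F α) := rfl
  simp only [hent]
  refine ⟨fun a b θ h0 h1 => hF.log_le a b h0 h1, by simp [hF0], by simp [hF1],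
    fun α hα => ?_, fun α hα => ?_⟩
  · exact ENNReal.log_le_zero_iff.2 (hF.le_one_of_mem_Icc hF0 hF1 hα)
  · exact ENNReal.zero_le_log_iff.2 (hF.one_le_of_notMem_Icc hF0 hF1 hα)
end

section
/- Let μ be the standard Gaussian measure (covariance I) on ℝ^Γ (product of standard one-dimensional Gaussians). For any κ > 0 and ε > 0, there is p(κ,ε) > 0 such that for every self-adjoint trace class operator M with ‖M‖₁ ≤ κ, μ({x : |(x,Mx) − tr(M)| < ε}) ≥ p(κ,ε). -/
/-!
Write `(x, Mx) - tr M = ∑ λⱼ ξⱼ` with `ξⱼ = xⱼ² - 1`: i.i.d., centred, square integrable, and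
`P(|ξⱼ| < η) > 0` for every `η > 0`. At most `κ / δ` coefficients satisfy `|λⱼ| ≥ δ`; with
probability at least `P(|ξ₀| < η)^(κ / δ)` all of their `ξⱼ` are below `η = ε / (4κ)`, so these
terms contribute at most `ε / 4`. The other terms have variance at most `δ κ Var ξ₀`, so by
Chebyshev each of their partial sums is below `ε / 2` with probability at least `1 / 2`,
independently of the first event. A reverse Fatou inequality for events passes to the full series.
-/

open MeasureTheory ProbabilityTheory Filter Finset
open scoped ENNReal NNReal

theorem le_measure_limsup_atTop {α : Type*} [MeasurableSpace α] {μ : Measure α}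
    [IsFiniteMeasure μ] {s : ℕ → Set α} (hs : ∀ n, MeasurableSet (s n)) {c : ℝ≥0∞}
    (hc : ∀ n, c ≤ μ (s n)) : c ≤ μ (limsup s atTop) := by
  have hanti : Antitone fun m => ⋃ n ≥ m, s n := fun m m' h =>
    Set.biUnion_mono (fun n hn => le_trans h hn) fun _ _ => le_rfl
  rw [limsup_eq_iInf_iSup_of_nat]
  simp only [Set.iSup_eq_iUnion, Set.iInf_eq_iInter]
  rw [hanti.measure_iInter (fun m => (MeasurableSet.biUnion (Set.to_countable _)
    fun n _ => hs n).nullMeasurableSet) ⟨0, measure_ne_top μ _⟩]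
  exact le_iInf fun m => (hc m).trans (measure_mono (Set.subset_biUnion_of_mem (le_refl m)))

section Coefficients

variable {ι : Type*} {lam : ι → ℝ}

theorem exists_finset_card_mul_le_and_abs_lt (hsum : Summable fun j => |lam j|) {κ δ : ℝ}
    (hκ : ∑' j, |lam j| ≤ κ) (hδ : 0 < δ) :
    ∃ J : Finset ι, (#J : ℝ) * δ ≤ κ ∧ ∀ j ∉ J, |lam j| < δ := by
  have hfin : {j | ¬ |lam j| < δ}.Finite :=
    eventually_cofinite.1 (hsum.tendsto_cofinite_zero.eventually_lt_const hδ)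
  refine ⟨hfin.toFinset, ?_, fun j hj => by simpa using hj⟩
  calc (#hfin.toFinset : ℝ) * δ = ∑ _ ∈ hfin.toFinset, δ := by simp
    _ ≤ ∑ j ∈ hfin.toFinset, |lam j| := sum_le_sum fun j hj => by simpa using hj
    _ ≤ ∑' j, |lam j| := hsum.sum_le_tsum _ fun j _ => abs_nonneg _
    _ ≤ κ := hκ

theorem sum_sq_le_mul_tsum_abs (hsum : Summable fun j => |lam j|) {s : Finset ι} {δ : ℝ}
    (hs : ∀ j ∈ s, |lam j| ≤ δ) (hδ : 0 ≤ δ) : ∑ j ∈ s, lam j ^ 2 ≤ δ * ∑' j, |lam j| :=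
  calc ∑ j ∈ s, lam j ^ 2 ≤ ∑ j ∈ s, δ * |lam j| := sum_le_sum fun j hj => by
        rw [← sq_abs, sq]
        exact mul_le_mul_of_nonneg_right (hs j hj) (abs_nonneg _)
    _ = δ * ∑ j ∈ s, |lam j| := (mul_sum ..).symm
    _ ≤ δ * ∑' j, |lam j| :=
        mul_le_mul_of_nonneg_left (hsum.sum_le_tsum _ fun j _ => abs_nonneg _) hδ

theorem abs_sum_mul_le_mul_tsum_abs (hsum : Summable fun j => |lam j|) {s : Finset ι}
    {x : ι → ℝ} {η : ℝ} (hx : ∀ j ∈ s, |x j| ≤ η) (hη : 0 ≤ η) :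
    |∑ j ∈ s, lam j * x j| ≤ η * ∑' j, |lam j| :=
  calc |∑ j ∈ s, lam j * x j| ≤ ∑ j ∈ s, η * |lam j| :=
        (abs_sum_le_sum_abs _ _).trans <| sum_le_sum fun j hj => by
          rw [abs_mul, mul_comm η]
          exact mul_le_mul_of_nonneg_left (hx j hj) (abs_nonneg _)
    _ = η * ∑ j ∈ s, |lam j| := (mul_sum ..).symm
    _ ≤ η * ∑' j, |lam j| :=
        mul_le_mul_of_nonneg_left (hsum.sum_le_tsum _ fun j _ => abs_nonneg _) hη

end Coefficients

theorem abs_tsum_le_of_frequently {g : ℕ → ℝ} (hg : Summable g) (J : Finset ℕ) {a b : ℝ}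
    (hJ : |∑ j ∈ J, g j| ≤ a) (htail : ∃ᶠ n in atTop, |∑ j ∈ range n \ J, g j| < b) :
    |∑' j, g j| ≤ a + b := by
  obtain ⟨m, hm⟩ := J.exists_nat_subset_range
  have hsub : ∀ᶠ n in atTop, J ⊆ range n :=
    eventually_atTop.2 ⟨m, fun n hn => hm.trans (range_mono hn)⟩
  have hlim := (hg.hasSum.tendsto_sum_nat.sub_const (∑ j ∈ J, g j)).abs
  have htail_le : |∑' j, g j - ∑ j ∈ J, g j| ≤ b :=
    le_of_tendsto_of_frequently hlim <| (htail.and_eventually hsub).mono fun n ⟨hn, hJn⟩ => by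
      rw [← sum_sdiff hJn, add_sub_cancel_right]
      exact hn.le
  calc |∑' j, g j| = |∑ j ∈ J, g j + (∑' j, g j - ∑ j ∈ J, g j)| := by rw [add_sub_cancel]
    _ ≤ a + b := (abs_add_le _ _).trans (add_le_add hJ htail_le)

section Probability

variable {Ω : Type*} [MeasurableSpace Ω] {P : Measure Ω}

theorem ae_summable_mul_of_lintegral_enorm_le {f : ℕ → Ω → ℝ} (hf : ∀ j, AEMeasurable (f j) P)
    {C : ℝ≥0∞} (hC : C ≠ ∞) (hfC : ∀ j, ∫⁻ ω, ‖f j ω‖ₑ ∂P ≤ C) {lam : ℕ → ℝ}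
    (hlam : Summable fun j => |lam j|) : ∀ᵐ ω ∂P, Summable fun j => lam j * f j ω := by
  have hint : ∫⁻ ω, ∑' j, ‖lam j * f j ω‖ₑ ∂P ≠ ∞ := by
    simp_rw [enorm_mul]
    rw [lintegral_tsum fun j => ((hf j).enorm.const_mul _)]
    simp_rw [lintegral_const_mul' _ _ enorm_ne_top]
    refine ne_top_of_le_ne_top ?_ (ENNReal.tsum_le_tsum fun j => mul_le_mul_right (hfC j) _)
    rw [ENNReal.tsum_mul_right]
    exact ENNReal.mul_ne_top (tsum_enorm_ne_top_iff_summable_norm.2 hlam) hC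
  filter_upwards [ae_lt_top' (AEMeasurable.tsum fun j =>
    ((hf j).const_mul (lam j)).enorm) hint] with ω hω
  exact Summable.of_enorm hω.ne

theorem inv_two_le_measure_abs_lt_of_variance_le [IsProbabilityMeasure P] {X : Ω → ℝ}
    (hX : MemLp X 2 P) (hmean : P[X] = 0) {c : ℝ} (hc : 0 < c) (hvar : 2 * Var[X; P] ≤ c ^ 2) :
    2⁻¹ ≤ P {ω | |X ω| < c} := by
  have hcompl : {ω | |X ω| < c} = {ω | c ≤ |X ω|}ᶜ := by ext; simp
  have hcheb := meas_ge_le_variance_div_sq hX hc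
  simp only [hmean, sub_zero] at hcheb
  rw [hcompl,
    prob_compl_eq_one_sub₀ (nullMeasurableSet_le aemeasurable_const hX.1.aemeasurable.abs)]
  have hhalf : ENNReal.ofReal (Var[X; P] / c ^ 2) ≤ 2⁻¹ :=
    calc ENNReal.ofReal (Var[X; P] / c ^ 2) ≤ ENNReal.ofReal 2⁻¹ :=
          ENNReal.ofReal_le_ofReal (by rw [div_le_iff₀ (by positivity)]; linarith)
      _ = 2⁻¹ := by rw [ENNReal.ofReal_inv_of_pos two_pos, ENNReal.ofReal_ofNat]
  calc 2⁻¹ = 1 - (2⁻¹ : ℝ≥0∞) := ENNReal.one_sub_inv_two.symm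
    _ ≤ 1 - P {ω | c ≤ |X ω|} := tsub_le_tsub_left (hcheb.trans hhalf) 1

variable {ξ : ℕ → Ω → ℝ}

theorem variance_sum_mul_of_identDistrib (hindep : iIndepFun ξ P) (hL2 : ∀ j, MemLp (ξ j) 2 P)
    (hident : ∀ j, IdentDistrib (ξ j) (ξ 0) P P) (lam : ℕ → ℝ) (s : Finset ℕ) :
    Var[fun ω => ∑ j ∈ s, lam j * ξ j ω; P] = (∑ j ∈ s, lam j ^ 2) * Var[ξ 0; P] := by
  have hsum := IndepFun.variance_sum (X := fun j ω => lam j * ξ j ω) (s := s) (μ := P)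
    (fun j _ => (hL2 j).const_mul _) fun i _ j _ hij =>
      (hindep.indepFun hij).comp (measurable_const_mul (lam i)) (measurable_const_mul (lam j))
  rw [sum_fn] at hsum
  rw [hsum, sum_mul]
  refine sum_congr rfl fun j _ => ?_
  rw [variance_const_mul, (hident j).variance_eq]

theorem inv_two_le_measure_abs_sum_mul_lt [IsProbabilityMeasure P] (hindep : iIndepFun ξ P)
    (hL2 : ∀ j, MemLp (ξ j) 2 P) (hident : ∀ j, IdentDistrib (ξ j) (ξ 0) P P)
    (hmean : P[ξ 0] = 0) {lam : ℕ → ℝ} {s : Finset ℕ} {c : ℝ} (hc : 0 < c)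
    (hvar : 2 * ((∑ j ∈ s, lam j ^ 2) * Var[ξ 0; P]) ≤ c ^ 2) :
    2⁻¹ ≤ P {ω | |∑ j ∈ s, lam j * ξ j ω| < c} := by
  refine inv_two_le_measure_abs_lt_of_variance_le
    (memLp_finsetSum s fun j _ => (hL2 j).const_mul _) ?_ hc
    (by rwa [variance_sum_mul_of_identDistrib hindep hL2 hident])
  rw [integral_finsetSum s fun j _ => ((hL2 j).integrable one_le_two).const_mul _]
  exact sum_eq_zero fun j _ => by rw [integral_const_mul, (hident j).integral_eq, hmean, mul_zero]

theorem ProbabilityTheory.iIndepFun.measure_biInter_eq_pow (hindep : iIndepFun ξ P)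
    (hident : ∀ j, IdentDistrib (ξ j) (ξ 0) P P) (J : Finset ℕ) {U : Set ℝ}
    (hU : MeasurableSet U) : P (⋂ j ∈ J, ξ j ⁻¹' U) = P (ξ 0 ⁻¹' U) ^ #J := by
  rw [hindep.meas_biInter fun j _ => ⟨U, hU, rfl⟩,
    prod_congr rfl fun j _ => (hident j).measure_mem_eq hU, prod_const]

theorem ProbabilityTheory.iIndepFun.measure_biInter_inter_sum_mem (hindep : iIndepFun ξ P)
    (hmeas : ∀ j, Measurable (ξ j)) {S T : Finset ℕ} (hST : Disjoint S T) {U V : Set ℝ}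
    (hU : MeasurableSet U) (hV : MeasurableSet V) (lam : ℕ → ℝ) :
    P ((⋂ j ∈ S, ξ j ⁻¹' U) ∩ {ω | ∑ j ∈ T, lam j * ξ j ω ∈ V})
      = P (⋂ j ∈ S, ξ j ⁻¹' U) * P {ω | ∑ j ∈ T, lam j * ξ j ω ∈ V} := by
  have hA : ⋂ j ∈ S, ξ j ⁻¹' U = (fun ω (i : S) => ξ i ω) ⁻¹' {v | ∀ i, v i ∈ U} := by
    ext; simp
  have hB : {ω | ∑ j ∈ T, lam j * ξ j ω ∈ V}
      = (fun ω (i : T) => ξ i ω) ⁻¹' {v : T → ℝ | ∑ i : T, lam i * v i ∈ V} := by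
    ext; simp [← sum_coe_sort T]
  rw [hA, hB]
  refine (hindep.indepFun_finset S T hST hmeas).measure_inter_preimage_eq_mul _ _ ?_ ?_
  · simp only [Set.ofPred_forall]
    exact MeasurableSet.iInter fun i => measurable_pi_apply i hU
  · exact Finset.measurable_sum _ (fun i _ => (measurable_pi_apply i).const_mul _) hV

theorem pow_mul_inv_two_le_measure_biInter_inter [IsProbabilityMeasure P]
    (hmeas : ∀ j, Measurable (ξ j)) (hindep : iIndepFun ξ P) (hL2 : ∀ j, MemLp (ξ j) 2 P)
    (hident : ∀ j, IdentDistrib (ξ j) (ξ 0) P P) (hmean : P[ξ 0] = 0) {lam : ℕ → ℝ}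
    {J T : Finset ℕ} (hJT : Disjoint J T) (η : ℝ) {c : ℝ} (hc : 0 < c)
    (hvar : 2 * ((∑ j ∈ T, lam j ^ 2) * Var[ξ 0; P]) ≤ c ^ 2) :
    P {ω | |ξ 0 ω| < η} ^ #J * 2⁻¹
      ≤ P ((⋂ j ∈ J, ξ j ⁻¹' {x | |x| < η}) ∩ {ω | ∑ j ∈ T, lam j * ξ j ω ∈ {x | |x| < c}}) := by
  have hball : ∀ r : ℝ, MeasurableSet {x : ℝ | |x| < r} := fun r =>
    measurableSet_lt continuous_abs.measurable measurable_const
  rw [hindep.measure_biInter_inter_sum_mem hmeas hJT (hball η) (hball c),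
    hindep.measure_biInter_eq_pow hident J (hball η)]
  exact mul_le_mul_right (inv_two_le_measure_abs_sum_mul_lt hindep hL2 hident hmean hc hvar) _

theorem pow_mul_inv_two_le_measure_abs_tsum_mul_lt [IsProbabilityMeasure P]
    (hmeas : ∀ j, Measurable (ξ j)) (hindep : iIndepFun ξ P)
    (hident : ∀ j, IdentDistrib (ξ j) (ξ 0) P P) (hL2 : MemLp (ξ 0) 2 P) (hmean : P[ξ 0] = 0)
    {lam : ℕ → ℝ} (hsum : Summable fun j => |lam j|) {κ ε δ : ℝ} (hκsum : ∑' j, |lam j| ≤ κ)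
    (hκ : 0 < κ) (hε : 0 < ε) (hδ : 0 ≤ δ) (hδκ : 8 * (δ * κ * Var[ξ 0; P]) ≤ ε ^ 2)
    {J : Finset ℕ} (hJ : ∀ j ∉ J, |lam j| ≤ δ) :
    P {ω | |ξ 0 ω| < ε / (4 * κ)} ^ #J * 2⁻¹ ≤ P {ω | |∑' j, lam j * ξ j ω| < ε} := by
  set η := ε / (4 * κ)
  have hball : ∀ r : ℝ, MeasurableSet {x : ℝ | |x| < r} := fun r =>
    measurableSet_lt continuous_abs.measurable measurable_const
  set A := ⋂ j ∈ J, ξ j ⁻¹' {x | |x| < η}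
  set B : ℕ → Set Ω := fun n => {ω | ∑ j ∈ range n \ J, lam j * ξ j ω ∈ {x | |x| < ε / 2}}
  have hAB : ∀ n, P {ω | |ξ 0 ω| < η} ^ #J * 2⁻¹ ≤ P (A ∩ B n) := fun n => by
    have hsq := sum_sq_le_mul_tsum_abs hsum (s := range n \ J)
      (fun j hj => hJ j (mem_sdiff.1 hj).2) hδ
    refine pow_mul_inv_two_le_measure_biInter_inter hmeas hindep
      (fun j => (hident j).symm.memLp_snd hL2) hident hmean sdiff_disjoint.symm η (by positivity) ?_
    nlinarith [mul_le_mul_of_nonneg_right hsq (variance_nonneg (ξ 0) P),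
      mul_le_mul_of_nonneg_left hκsum hδ, variance_nonneg (ξ 0) P]
  have hsumm := ae_summable_mul_of_lintegral_enorm_le (fun j => (hmeas j).aemeasurable)
    (hL2.integrable one_le_two).2.ne (fun j => ((hident j).comp measurable_enorm).lintegral_eq.le)
    hsum
  refine (le_measure_limsup_atTop (fun n => ?_) hAB).trans (measure_mono_ae ?_)
  · exact (J.measurableSet_biInter fun j _ => hmeas j (hball η)).inter
      (Finset.measurable_sum _ (fun j _ => (hmeas j).const_mul _) (hball _))
  filter_upwards [hsumm] with ω hω hmem
  have hfreq : ∃ᶠ n in atTop, ω ∈ A ∩ B n := mem_limsup_iff_frequently_mem.1 hmem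
  obtain ⟨-, hAω, -⟩ := hfreq.exists
  have hJsum := abs_sum_mul_le_mul_tsum_abs hsum (fun j hj => (Set.mem_iInter₂.1 hAω j hj).le)
    (by positivity : 0 ≤ η)
  have htsum := abs_tsum_le_of_frequently hω J hJsum (hfreq.mono fun n hn => hn.2)
  have hηκ : η * κ = ε / 4 := by simp only [η]; field_simp
  show |∑' j, lam j * ξ j ω| < ε
  nlinarith [mul_le_mul_of_nonneg_left hκsum (by positivity : 0 ≤ η)]

theorem exists_pos_le_measure_abs_tsum_mul_lt [IsProbabilityMeasure P]
    (hmeas : ∀ j, Measurable (ξ j)) (hindep : iIndepFun ξ P)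
    (hident : ∀ j, IdentDistrib (ξ j) (ξ 0) P P) (hL2 : MemLp (ξ 0) 2 P) (hmean : P[ξ 0] = 0)
    (hsmall : ∀ η > 0, 0 < P {ω | |ξ 0 ω| < η}) {κ ε : ℝ} (hκ : 0 < κ) (hε : 0 < ε) :
    ∃ p > 0, ∀ lam : ℕ → ℝ, Summable (fun j => |lam j|) → ∑' j, |lam j| ≤ κ →
      ENNReal.ofReal p ≤ P {ω | |∑' j, lam j * ξ j ω| < ε} := by
  set σ2 := Var[ξ 0; P]
  have hσ2 : 0 ≤ σ2 := variance_nonneg _ _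
  set δ := ε ^ 2 / (8 * κ * (σ2 + 1))
  have hδ : 0 < δ := by positivity
  have hδκ : 8 * (δ * κ * σ2) ≤ ε ^ 2 := by
    have : δ * κ * (σ2 + 1) = ε ^ 2 / 8 := by
      have : σ2 + 1 ≠ 0 := by positivity
      simp only [δ]; field_simp
    nlinarith
  set N := ⌈κ / δ⌉₊
  set q := P {ω | |ξ 0 ω| < ε / (4 * κ)}
  have hq : 0 < q.toReal := ENNReal.toReal_pos (hsmall _ (by positivity)).ne' (measure_ne_top _ _)
  refine ⟨q.toReal ^ N / 2, by positivity, fun lam hsum hκsum => ?_⟩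
  obtain ⟨J, hJcard, hJsmall⟩ := exists_finset_card_mul_le_and_abs_lt hsum hκsum hδ
  have hJN : #J ≤ N := by exact_mod_cast ((le_div_iff₀ hδ).2 hJcard).trans (Nat.le_ceil _)
  calc ENNReal.ofReal (q.toReal ^ N / 2) = q ^ N * 2⁻¹ := by
        rw [ENNReal.ofReal_div_of_pos two_pos, ENNReal.ofReal_pow hq.le, ENNReal.ofReal_toReal
          (measure_ne_top _ _), div_eq_mul_inv, ENNReal.ofReal_ofNat]
    _ ≤ q ^ #J * 2⁻¹ := mul_le_mul_left (pow_le_pow_right_of_le_one' prob_le_one hJN) _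
    _ ≤ P {ω | |∑' j, lam j * ξ j ω| < ε} :=
        pow_mul_inv_two_le_measure_abs_tsum_mul_lt hmeas hindep hident hL2 hmean hsum hκsum hκ hε
          hδ.le hδκ fun j hj => (hJsmall j hj).le

end Probability

theorem gaussianReal_pos_of_isOpen (μ : ℝ) {v : ℝ≥0} (hv : v ≠ 0) {s : Set ℝ} (hs : IsOpen s)
    (hne : s.Nonempty) : 0 < gaussianReal μ v s :=
  pos_iff_ne_zero.2 fun h => hs.measure_ne_zero volume hne
    (gaussianReal_absolutelyContinuous' μ hv h)

theorem memLp_sq_sub_one_gaussianReal : MemLp (fun x : ℝ => x ^ 2 - 1) 2 (gaussianReal 0 1) := by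
  have h := (memLp_id_gaussianReal' (μ := 0) (v := 1) 4 ENNReal.ofNat_ne_top).norm_rpow_div 2
  rw [show (4 : ℝ≥0∞) / 2 = 2 from ((ENNReal.eq_div_iff two_ne_zero ENNReal.ofNat_ne_top).2
    (by norm_num)).symm] at h
  norm_num at h
  exact h.sub (memLp_const 1)

theorem integral_sq_sub_one_gaussianReal : ∫ x, (x ^ 2 - 1) ∂gaussianReal 0 1 = 0 := by
  have hsq : ∫ x, x ^ 2 ∂gaussianReal 0 1 = 1 := by
    rw [← variance_of_integral_eq_zero aemeasurable_id' integral_id_gaussianReal,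
      variance_fun_id_gaussianReal, NNReal.coe_one]
  rw [integral_sub (f := fun x => x ^ 2) (memLp_id_gaussianReal 2).integrable_sq
    (integrable_const 1), hsq]
  simp

/-- Small-ball estimate for Gaussian quadratic forms: under the
standard Gaussian measure (identity covariance, encoded by an i.i.d. standard normal
sequence `X j`), for any `κ, ε > 0` there is `p(κ,ε) > 0` such that for every
self-adjoint trace class `M` with `‖M‖₁ ≤ κ` (encoded by its eigenvalue sequence
`lam` with `∑ |lam j| ≤ κ`, so that `(x,Mx) − tr M = ∑ lam j (x_j² − 1)`),
`μ({x : |(x,Mx) − tr M| < ε}) ≥ p(κ,ε)`. -/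
theorem stmt14 {Ω : Type*} [MeasurableSpace Ω] (P : Measure Ω) [IsProbabilityMeasure P]
    (X : ℕ → Ω → ℝ) (hmeas : ∀ j, Measurable (X j))
    (hindep : iIndepFun X P)
    (hgauss : ∀ j, P.map (X j) = gaussianReal 0 1)
    (κ ε : ℝ) (hκ : 0 < κ) (hε : 0 < ε) :
    ∃ p > 0, ∀ lam : ℕ → ℝ, Summable (fun j => |lam j|) → (∑' j, |lam j|) ≤ κ →
      ENNReal.ofReal p ≤ P {ω | |∑' j, lam j * ((X j ω) ^ 2 - 1)| < ε} := by
  have hf : Continuous fun x : ℝ => x ^ 2 - 1 := by fun_prop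
  have hξ : ∀ j, IdentDistrib (fun ω => X j ω ^ 2 - 1) (fun x : ℝ => x ^ 2 - 1) P
      (gaussianReal 0 1) := fun j =>
    IdentDistrib.comp ⟨(hmeas j).aemeasurable, aemeasurable_id, by rw [hgauss j, Measure.map_id]⟩
      hf.measurable
  have hsmall : ∀ η > 0, 0 < P {ω | |X 0 ω ^ 2 - 1| < η} := fun η hη => by
    rw [← Set.preimage_ofPred_eq (p := fun x => |x| < η), (hξ 0).measure_mem_eq
      (measurableSet_lt continuous_abs.measurable measurable_const)]
    exact gaussianReal_pos_of_isOpen 0 one_ne_zero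
      (isOpen_lt (continuous_abs.comp hf) continuous_const) ⟨1, by simpa using hη⟩
  exact exists_pos_le_measure_abs_tsum_mul_lt (fun j => hf.measurable.comp (hmeas j))
    (hindep.comp (fun _ x => x ^ 2 - 1) fun _ => hf.measurable)
    (fun j => (hξ j).trans (hξ 0).symm)
    ((hξ 0).symm.memLp_snd memLp_sq_sub_one_gaussianReal)
    ((hξ 0).integral_eq.trans integral_sq_sub_one_gaussianReal) hsmall hκ hε
end
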